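/- arXiv:2307.14284 — 2 statements merged into one kernel-verified Lean document; each statement's English description precedes it below -/
import Mathlib

section
/- Let C be a nonempty closed convex subset of the Euclidean space ℝⁿ with empty interior (equivalently, C is a closed convex nowhere dense subset). Then the distance function d_C(z) = infDist(z, C) is a submetry from ℝⁿ onto the half-line [0,∞): for every x ∈ ℝⁿ and every r > 0, the image d_C(B_r(x)) equals B_r(d_C(x)) ∩ [0,∞), i.e. the set of all s ≥ 0 with |s − d_C(x)| < r. -/
/-!
Since `d_C` is 1-Lipschitz, the image of `B_r(x)` lies in `[0, ∞) ∩ B_r(d_C(x))`. Conversely,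
if `y ∉ C` has nearest point `p ∈ C`, the variational inequality for convex sets shows that `p`
remains a nearest point of every `p + t • (y - p)` with `t ≥ 0`, so `d_C` grows linearly along
this ray and takes every value `s ≥ 0` at distance `|s - d_C(y)|` from `y`. As `C` has empty
interior, such a `y` can be chosen arbitrarily close to `x`.
-/

open Metric RealInnerProductSpace

theorem abs_infDist_sub_infDist_le {α : Type*} [PseudoMetricSpace α] (s : Set α) (x y : α) :
    |infDist x s - infDist y s| ≤ dist x y := by
  simpa [Real.dist_eq] using (lipschitz_infDist_pt (s := s)).dist_le_mul x y

section NearestPoint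

variable {E : Type*} [NormedAddCommGroup E] [InnerProductSpace ℝ E] {C : Set E}

theorem Convex.inner_sub_le_zero_of_dist_eq_infDist (hC : Convex ℝ C) {y p w : E} (hp : p ∈ C)
    (hd : dist y p = infDist y C) (hw : w ∈ C) : ⟪y - p, w - p⟫ ≤ 0 := by
  refine (norm_eq_iInf_iff_real_inner_le_zero hC hp).1 ?_ w hw
  simpa [infDist_eq_iInf, dist_eq_norm] using hd

theorem Convex.infDist_add_smul_of_dist_eq_infDist (hC : Convex ℝ C) {y p : E} (hp : p ∈ C)
    (hd : dist y p = infDist y C) {t : ℝ} (ht : 0 ≤ t) :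
    infDist (p + t • (y - p)) C = t * infDist y C := by
  have hdist : dist (p + t • (y - p)) p = t * infDist y C := by
    rw [← hd, dist_eq_norm, dist_eq_norm, add_sub_cancel_left, norm_smul, Real.norm_of_nonneg ht]
  refine le_antisymm (hdist ▸ infDist_le_dist_of_mem hp) ((le_infDist ⟨p, hp⟩).2 fun w hw => ?_)
  have hinner := hC.inner_sub_le_zero_of_dist_eq_infDist hp hd hw
  have hsq : (t * ‖y - p‖) ^ 2 ≤ ‖t • (y - p) - (w - p)‖ ^ 2 := by
    rw [norm_sub_sq_real, norm_smul, real_inner_smul_left, Real.norm_of_nonneg ht]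
    nlinarith [sq_nonneg ‖w - p‖]
  rw [← hd, dist_eq_norm, dist_eq_norm, show p + t • (y - p) - w = t • (y - p) - (w - p) by abel]
  exact (pow_le_pow_iff_left₀ (by positivity) (norm_nonneg _) two_ne_zero).1 hsq

theorem Convex.exists_infDist_eq_of_notMem [ProperSpace E] (hC : Convex ℝ C) (hCc : IsClosed C)
    (hne : C.Nonempty) {y : E} (hy : y ∉ C) {s : ℝ} (hs : 0 ≤ s) :
    ∃ z, infDist z C = s ∧ dist z y = |s - infDist y C| := by
  obtain ⟨p, hp, hd⟩ := hCc.exists_infDist_eq_dist hne y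
  have hpos : 0 < infDist y C := (hCc.notMem_iff_infDist_pos hne).1 hy
  refine ⟨p + (s / infDist y C) • (y - p), ?_, ?_⟩
  · rw [hC.infDist_add_smul_of_dist_eq_infDist hp hd.symm (by positivity),
      div_mul_cancel₀ _ hpos.ne']
  · have hs_sub : s - infDist y C = (s / infDist y C - 1) * infDist y C := by field_simp
    rw [dist_eq_norm, show p + (s / infDist y C) • (y - p) - y = (s / infDist y C - 1) • (y - p)
      by module, norm_smul, ← dist_eq_norm y p, ← hd, hs_sub, abs_mul, abs_of_pos hpos,
      Real.norm_eq_abs]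

end NearestPoint

/-- The distance function to a nonempty closed convex nowhere dense subset `C` of
Euclidean space is a submetry onto the half-line `[0, ∞)`: the image of any open ball
`B_r(x)` is the set of all `s ≥ 0` with `|s - d_C(x)| < r`. -/
theorem distance_to_convex_is_submetry {n : ℕ} (C : Set (EuclideanSpace ℝ (Fin n)))
    (hne : C.Nonempty) (hclosed : IsClosed C) (hconv : Convex ℝ C)
    (hint : interior C = ∅) :
    ∀ (x : EuclideanSpace ℝ (Fin n)) (r : ℝ), 0 < r →
      (fun z => Metric.infDist z C) '' Metric.ball x r =
        {s : ℝ | 0 ≤ s ∧ |s - Metric.infDist x C| < r} := by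
  intro x r _
  ext s
  constructor
  · rintro ⟨z, hz, rfl⟩
    exact ⟨infDist_nonneg, (abs_infDist_sub_infDist_le C z x).trans_lt hz⟩
  · rintro ⟨hs, hsx⟩
    obtain ⟨y, hy, hyx⟩ := (interior_eq_empty_iff_dense_compl.1 hint).exists_mem_open
      (isOpen_ball (x := x)) (nonempty_ball.2 (half_pos (sub_pos.2 hsx)))
    obtain ⟨z, hzs, hzy⟩ := hconv.exists_infDist_eq_of_notMem hclosed hne hy hs
    refine ⟨z, ?_, hzs⟩
    rw [mem_ball] at hyx ⊢
    calc dist z x ≤ dist z y + dist y x := dist_triangle z y x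
      _ ≤ |s - infDist x C| + 2 * dist y x := by
        rw [hzy]
        linarith [abs_sub_le s (infDist x C) (infDist y C), abs_infDist_sub_infDist_le C y x,
          abs_sub_comm (infDist x C) (infDist y C)]
      _ < r := by linarith
end

section
/- There exists a universal constant c > 0 with the following property. Let n be arbitrary, let L be a closed subset of the Euclidean space ℝⁿ, let p ∈ L, and suppose that every point x in the open ball B_{10}(p) has a unique nearest point Π(x) in L (i.e. Π(x) ∈ L, d(x, Π(x)) = infDist(x, L), and any q ∈ L with d(x,q) = infDist(x, L) equals Π(x)). Then for every 0 < r ≤ 3, the nearest-point projection Π is (1 + c·r)-Lipschitz on the ball B_r(p): for all x₁, x₂ ∈ B_r(p), ‖Π(x₁) − Π(x₂)‖ ≤ (1 + c·r)·‖x₁ − x₂‖. -/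
/-!
Write `d = infDist · L`. At a point `z ∉ L` with a unique nearest point `b`, nearest points of
nearby points are close to `b`, so `d` grows at almost unit rate along `z - b`. Maximising
`d - c * dist · x` over a compact ball turns this into global growth: from `x` with nearest point
`a` one reaches a point `z` with `‖z - x‖ ≤ R - d x` and `R ≤ d z`. The equality case of the
triangle inequality puts `x` on the segment `[a, z]`, and since the ball `B_R(z)` misses `L`,
`⟪x - a, q - a⟫ ≤ d x / (2R) * ‖q - a‖²` for every `q ∈ L`. Adding this inequality at `x₁` and at
`x₂` bounds `‖Π x₁ - Π x₂‖²` by `r / (10 - r) * ‖Π x₁ - Π x₂‖² + ‖x₁ - x₂‖ * ‖Π x₁ - Π x₂‖`.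
-/

open Metric Filter Topology RealInnerProductSpace

section Slope

variable {X : Type*} [MetricSpace X] [ProperSpace X] {f : X → ℝ} {x : X} {T : ℝ}

theorem exists_mem_closedBall_add_mul_le (hf : Continuous f) (hT : 0 ≤ T) {c c' : ℝ}
    (hc : 0 ≤ c) (hcc' : c < c')
    (hslope : ∀ z ∈ ball x T, f x ≤ f z →
      ∃ᶠ h in 𝓝[>] 0, ∃ z', dist z' z ≤ h ∧ f z + c' * h ≤ f z') :
    ∃ z ∈ closedBall x T, f x + c * T ≤ f z := by
  -- a maximiser of `f - c * dist · x` on the closed ball cannot lie in the open ball,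
  -- where `f` grows faster than `c`
  have hψ : Continuous fun y => f y - c * dist y x := by fun_prop
  obtain ⟨z, hz, hmax⟩ :=
    (isCompact_closedBall x T).exists_isMaxOn (nonempty_closedBall.2 hT) hψ.continuousOn
  have hxz : f x ≤ f z - c * dist z x := by simpa using hmax (mem_closedBall_self hT)
  refine ⟨z, hz, ?_⟩
  suffices dist z x = T by rw [← this]; linarith
  by_contra hne
  have hzT : dist z x < T := lt_of_le_of_ne (mem_closedBall.1 hz) hne
  have hfz : f x ≤ f z := by nlinarith [dist_nonneg (x := z) (y := x)]
  obtain ⟨h, ⟨z', hz'z, hz'⟩, hh0, hhT⟩ :=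
    ((hslope z hzT hfz).and_eventually (Ioo_mem_nhdsGT (sub_pos.2 hzT))).exists
  have hz'x : dist z' x ≤ dist z x + h := (dist_triangle z' z x).trans (by linarith)
  have hz'max : f z' - c * dist z' x ≤ f z - c * dist z x :=
    hmax (mem_closedBall.2 (by linarith))
  nlinarith [mul_le_mul_of_nonneg_left hz'x hc]

theorem exists_mem_closedBall_add_le (hf : Continuous f) (hT : 0 ≤ T)
    (hslope : ∀ z ∈ ball x T, f x ≤ f z → ∀ c ∈ Set.Ico (0 : ℝ) 1,
      ∃ᶠ h in 𝓝[>] 0, ∃ z', dist z' z ≤ h ∧ f z + c * h ≤ f z') :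
    ∃ z ∈ closedBall x T, f x + T ≤ f z := by
  obtain ⟨z, hz, hmax⟩ :=
    (isCompact_closedBall x T).exists_isMaxOn (nonempty_closedBall.2 hT) hf.continuousOn
  refine ⟨z, hz, ?_⟩
  have hlim : Tendsto (fun c : ℝ => f x + c * T) (𝓝[<] 1) (𝓝 (f x + 1 * T)) :=
    ((continuous_const.add (continuous_id.mul continuous_const)).tendsto 1).mono_left
      nhdsWithin_le_nhds
  refine one_mul T ▸ le_of_tendsto hlim ?_
  filter_upwards [Ioo_mem_nhdsLT zero_lt_one] with c ⟨hc0, hc1⟩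
  obtain ⟨z', hz', hle⟩ := exists_mem_closedBall_add_mul_le hf hT hc0.le
    (c' := (c + 1) / 2) (by linarith)
    fun y hy hfy => hslope y hy hfy _ ⟨by linarith, by linarith⟩
  exact hle.trans (hmax hz')

end Slope

def IsUniqueNearestPoint {α : Type*} [PseudoMetricSpace α] (L : Set α) (x a : α) : Prop :=
  a ∈ L ∧ dist x a = infDist x L ∧ ∀ q ∈ L, dist x q = infDist x L → q = a

theorem IsUniqueNearestPoint.eventually_dist_lt {α : Type*} [MetricSpace α] [ProperSpace α]
    {L : Set α} (hL : IsClosed L) {z b : α} (hb : IsUniqueNearestPoint L z b) {δ : ℝ}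
    (hδ : 0 < δ) : ∀ᶠ y in 𝓝 z, ∀ q ∈ L, dist y q = infDist y L → dist q b < δ := by
  set K := L \ ball b δ
  have hmemK : ∀ q ∈ L, ¬dist q b < δ → q ∈ K := fun q hq h => ⟨hq, h⟩
  rcases K.eq_empty_or_nonempty with hK | hK
  · refine Eventually.of_forall fun y q hq _ => by_contra fun h => ?_
    simpa [hK] using hmemK q hq h
  obtain ⟨q₀, hq₀K, hq₀⟩ := (hL.sdiff isOpen_ball).exists_infDist_eq_dist hK z
  have hgap : infDist z L < infDist z K := by
    refine (infDist_le_infDist_of_subset Set.sdiff_subset hK).lt_of_ne fun h => ?_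
    have hq₀b : q₀ = b := hb.2.2 q₀ hq₀K.1 (by rw [← hq₀, h])
    exact hq₀K.2 (hq₀b ▸ mem_ball_self hδ)
  filter_upwards [ball_mem_nhds z (half_pos (sub_pos.2 hgap))] with y hy q hq hyq
  by_contra h
  have h1 := infDist_le_infDist_add_dist (x := y) (y := z) (s := L)
  have h2 := infDist_le_infDist_add_dist (x := z) (y := y) (s := K)
  have h3 := infDist_le_dist_of_mem (hmemK q hq h) (x := y)
  rw [mem_ball] at hy
  rw [dist_comm] at h2
  linarith

theorem IsUniqueNearestPoint.dist_le {α : Type*} [PseudoMetricSpace α] {L : Set α} {x a q : α}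
    (h : IsUniqueNearestPoint L x a) (hq : q ∈ L) : dist x a ≤ dist x q :=
  h.2.1 ▸ infDist_le_dist_of_mem hq

section InnerProductSpace

variable {E : Type*} [NormedAddCommGroup E] [InnerProductSpace ℝ E]

theorem inner_sub_le_of_le_infDist {L : Set E} {a q x z : E} {R : ℝ} (ha : a ∈ L) (hq : q ∈ L)
    (hR : 0 < R) (hzx : dist z x + dist x a ≤ R) (hRz : R ≤ infDist z L) :
    ⟪x - a, q - a⟫ ≤ dist x a / (2 * R) * ‖q - a‖ ^ 2 := by
  have hza : dist z a = R :=
    le_antisymm ((dist_triangle z x a).trans hzx) (hRz.trans (infDist_le_dist_of_mem ha))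
  obtain ⟨t, ⟨ht0, -⟩, rfl⟩ : Wbtw ℝ a x z := by
    refine dist_add_dist_eq_iff.1 (le_antisymm ?_ (dist_triangle a x z))
    rw [dist_comm a x, dist_comm x z, dist_comm a z]
    linarith
  have hxa : AffineMap.lineMap a z t - a = t • (z - a) := by
    rw [AffineMap.lineMap_apply, vsub_eq_sub, vadd_eq_add, add_sub_cancel_right]
  have ht : dist (AffineMap.lineMap a z t) a = t * R := by
    rw [dist_eq_norm, hxa, norm_smul, ← dist_eq_norm, hza, Real.norm_eq_abs, abs_of_nonneg ht0]
  have hball : ⟪z - a, q - a⟫ ≤ ‖q - a‖ ^ 2 / 2 := by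
    have h1 : R ≤ ‖z - q‖ := dist_eq_norm z q ▸ hRz.trans (infDist_le_dist_of_mem hq)
    have h2 : ‖z - q‖ ^ 2 = ‖z - a‖ ^ 2 - 2 * ⟪z - a, q - a⟫ + ‖q - a‖ ^ 2 := by
      rw [← norm_sub_sq_real, sub_sub_sub_cancel_right]
    rw [← dist_eq_norm z a, hza] at h2
    nlinarith
  rw [hxa, real_inner_smul_left, ht, mul_div_mul_right _ _ hR.ne']
  calc t * ⟪z - a, q - a⟫ ≤ t * (‖q - a‖ ^ 2 / 2) := mul_le_mul_of_nonneg_left hball ht0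
    _ = t / 2 * ‖q - a‖ ^ 2 := by ring

theorem norm_sub_le_of_inner_le {x₁ x₂ a b : E} {κ : ℝ}
    (h₁ : ⟪x₁ - a, b - a⟫ ≤ κ * ‖b - a‖ ^ 2) (h₂ : ⟪x₂ - b, a - b⟫ ≤ κ * ‖a - b‖ ^ 2) :
    (1 - 2 * κ) * ‖a - b‖ ≤ ‖x₁ - x₂‖ := by
  rw [norm_sub_rev] at h₁
  have hsplit : ‖a - b‖ ^ 2 = ⟪x₁ - a, b - a⟫ + ⟪x₁ - x₂, a - b⟫ + ⟪x₂ - b, a - b⟫ := by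
    rw [← inner_neg_neg, neg_sub, neg_sub, ← inner_add_left, ← inner_add_left,
      sub_add_sub_cancel, sub_add_sub_cancel, real_inner_self_eq_norm_sq]
  have hcs : ⟪x₁ - x₂, a - b⟫ ≤ ‖x₁ - x₂‖ * ‖a - b‖ := real_inner_le_norm _ _
  rcases (norm_nonneg (a - b)).eq_or_lt with h | h
  · rw [← h, mul_zero]; exact norm_nonneg _
  · refine le_of_mul_le_mul_right ?_ h
    nlinarith

theorem IsUniqueNearestPoint.eventually_exists_add_mul_le_infDist [ProperSpace E] {L : Set E}
    (hL : IsClosed L) {z b : E} (hb : IsUniqueNearestPoint L z b) (hz : 0 < infDist z L)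
    {c : ℝ} (hc0 : 0 ≤ c) (hc1 : c < 1) :
    ∀ᶠ h in 𝓝[>] 0, ∃ z', dist z' z ≤ h ∧ infDist z L + c * h ≤ infDist z' L := by
  set g := infDist z L
  set w := ‖z - b‖⁻¹ • (z - b)
  have hzb : ‖z - b‖ = g := by rw [← dist_eq_norm]; exact hb.2.1
  have hw : ‖w‖ = 1 := norm_smul_inv_norm (norm_pos_iff.1 (hzb ▸ hz))
  have hwzb : ⟪w, z - b⟫ = g := by
    rw [real_inner_smul_left, real_inner_self_eq_norm_sq, hzb]
    field_simp
  have hcont : Tendsto (fun h : ℝ => z + h • w) (𝓝[>] 0) (𝓝 z) := by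
    have : Continuous fun h : ℝ => z + h • w := by fun_prop
    simpa using (this.tendsto 0).mono_left nhdsWithin_le_nhds
  filter_upwards [hcont.eventually (hb.eventually_dist_lt hL (δ := (1 - c) * g) (by nlinarith)),
    self_mem_nhdsWithin] with h hnear (hh : 0 < h)
  refine ⟨z + h • w, ?_, ?_⟩
  · rw [dist_self_add_left, norm_smul, hw, mul_one, Real.norm_of_nonneg hh.le]
  · obtain ⟨q, hq, hyq⟩ := hL.exists_infDist_eq_dist ⟨b, hb.1⟩ (z + h • w)
    have hqb : ‖b - q‖ < (1 - c) * g := by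
      rw [← dist_eq_norm, dist_comm]; exact hnear q hq hyq.symm
    have hzq : g ≤ ‖z - q‖ := dist_eq_norm z q ▸ infDist_le_dist_of_mem hq
    have hinner : g - ‖b - q‖ ≤ ⟪w, z - q⟫ := by
      have hsplit : ⟪w, z - q⟫ = g + ⟪w, b - q⟫ := by
        rw [← hwzb, ← inner_add_right, sub_add_sub_cancel]
      have := neg_le_of_abs_le (abs_real_inner_le_norm w (b - q))
      rw [hw, one_mul] at this
      linarith
    have hexp : ‖z + h • w - q‖ ^ 2 = ‖z - q‖ ^ 2 + 2 * (h * ⟪w, z - q⟫) + h ^ 2 := by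
      rw [show z + h • w - q = (z - q) + h • w by abel, norm_add_sq_real, real_inner_smul_right,
        norm_smul, hw, real_inner_comm, Real.norm_eq_abs, abs_of_pos hh, mul_one]
    rw [hyq, dist_eq_norm, ← pow_le_pow_iff_left₀ (by positivity) (norm_nonneg _) two_ne_zero,
      hexp]
    have hc2 : c ^ 2 ≤ 1 := by nlinarith
    nlinarith [mul_le_mul_of_nonneg_left hinner hh.le, mul_le_mul_of_nonneg_left hqb.le hh.le,
      pow_le_pow_left₀ hz.le hzq 2, mul_le_mul_of_nonneg_right hc2 (sq_nonneg h)]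

theorem inner_sub_le_of_forall_mem_ball_isUniqueNearestPoint [ProperSpace E] {L : Set E}
    (hL : IsClosed L) {x a q : E} (ha : a ∈ L) (hxa : dist x a = infDist x L) (hq : q ∈ L)
    {R : ℝ} (hR : dist x a ≤ R)
    (huniq : ∀ y ∈ ball x (R - dist x a), ∃ b, IsUniqueNearestPoint L y b) :
    ⟪x - a, q - a⟫ ≤ dist x a / (2 * R) * ‖q - a‖ ^ 2 := by
  rcases (dist_nonneg (x := x) (y := a)).eq_or_lt with hd | hd
  · obtain rfl := dist_eq_zero.1 hd.symm
    simp
  obtain ⟨z, hz, hRz⟩ :=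
    exists_mem_closedBall_add_le (continuous_infDist_pt L) (sub_nonneg.2 hR)
      fun y hy hxy c ⟨hc0, hc1⟩ => by
        obtain ⟨b, hb⟩ := huniq y hy
        exact (hb.eventually_exists_add_mul_le_infDist hL (by linarith) hc0 hc1).frequently
  exact inner_sub_le_of_le_infDist ha hq (hd.trans_le hR)
    (by rw [mem_closedBall] at hz; linarith) (by linarith)

theorem inner_sub_apply_le_of_forall_mem_ball_isUniqueNearestPoint [ProperSpace E] {L : Set E}
    (hL : IsClosed L) {p : E} (hp : p ∈ L) {proj : E → E} {ρ r : ℝ} (hr : 2 * r ≤ ρ)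
    (hproj : ∀ y ∈ ball p ρ, IsUniqueNearestPoint L y (proj y)) {x q : E} (hx : x ∈ ball p r)
    (hq : q ∈ L) : ⟪x - proj x, q - proj x⟫ ≤ r / (2 * (ρ - r)) * ‖q - proj x‖ ^ 2 := by
  have hxp : dist x p < r := hx
  have hr0 : 0 < r := dist_nonneg.trans_lt hxp
  have hxa := hproj x (ball_subset_ball (by linarith) hx)
  have hd : dist x (proj x) < r := (hxa.dist_le hp).trans_lt hxp
  calc ⟪x - proj x, q - proj x⟫
      ≤ dist x (proj x) / (2 * (ρ - r)) * ‖q - proj x‖ ^ 2 :=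
        inner_sub_le_of_forall_mem_ball_isUniqueNearestPoint hL hxa.1 hxa.2.1 hq (by linarith)
          fun y hy => ⟨proj y, hproj y (ball_subset_ball' ?_ hy)⟩
    _ ≤ r / (2 * (ρ - r)) * ‖q - proj x‖ ^ 2 := by
        gcongr
        linarith
  linarith [dist_nonneg (x := x) (y := proj x)]

end InnerProductSpace

/-- There is a universal constant `c > 0` such that: whenever `L` is a closed subset
of Euclidean space `ℝⁿ` containing a point `p`, and every point of the open ball
`B₁₀(p)` has a unique nearest point `Π x` in `L`, then for every `0 < r ≤ 3` the
nearest-point projection `Π` is `(1 + c·r)`-Lipschitz on `B_r(p)`. -/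
theorem nearestPoint_projection_lipschitz :
    ∃ c : ℝ, 0 < c ∧
      ∀ (n : ℕ) (L : Set (EuclideanSpace ℝ (Fin n))) (p : EuclideanSpace ℝ (Fin n))
        (proj : EuclideanSpace ℝ (Fin n) → EuclideanSpace ℝ (Fin n)),
        IsClosed L → p ∈ L →
        (∀ x ∈ Metric.ball p 10,
          proj x ∈ L ∧ dist x (proj x) = Metric.infDist x L ∧
            ∀ q ∈ L, dist x q = Metric.infDist x L → q = proj x) →
        ∀ r : ℝ, 0 < r → r ≤ 3 →
          ∀ x₁ ∈ Metric.ball p r, ∀ x₂ ∈ Metric.ball p r,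
            dist (proj x₁) (proj x₂) ≤ (1 + c * r) * dist x₁ x₂ := by
  refine ⟨1, one_pos, fun n L p proj hL hp hproj r hr0 hr3 x₁ hx₁ x₂ hx₂ => ?_⟩
  have hmem : ∀ x ∈ ball p r, proj x ∈ L :=
    fun x hx => (hproj x (ball_subset_ball (by linarith) hx)).1
  have hreach : ∀ x ∈ ball p r, ∀ q ∈ L,
      ⟪x - proj x, q - proj x⟫ ≤ r / (2 * (10 - r)) * ‖q - proj x‖ ^ 2 :=
    fun x hx q hq =>
      inner_sub_apply_le_of_forall_mem_ball_isUniqueNearestPoint hL hp (by linarith) hproj hx hq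
  have hlip :=
    norm_sub_le_of_inner_le (hreach x₁ hx₁ _ (hmem x₂ hx₂)) (hreach x₂ hx₂ _ (hmem x₁ hx₁))
  have hκ : 1 ≤ (1 + r) * (1 - 2 * (r / (2 * (10 - r)))) := by
    have h10 : 0 < 10 - r := by linarith
    rw [mul_div_assoc', mul_div_mul_left r (10 - r) two_ne_zero, one_sub_div h10.ne',
      mul_div_assoc', le_div_iff₀ h10]
    nlinarith
  rw [one_mul, dist_eq_norm, dist_eq_norm]
  calc ‖proj x₁ - proj x₂‖ ≤ (1 + r) * (1 - 2 * (r / (2 * (10 - r)))) * ‖proj x₁ - proj x₂‖ :=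
        le_mul_of_one_le_left (norm_nonneg _) hκ
    _ ≤ (1 + r) * ‖x₁ - x₂‖ := by
        rw [mul_assoc]
        exact mul_le_mul_of_nonneg_left hlip (by linarith)
end
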